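/- arXiv:2103.06753 — 4 statements merged into one kernel-verified Lean document; each statement's English description precedes it below -/
import Mathlib

section
/- Let J be C², strictly concave with J(0)=J(1)=0 and maximizer m, and let ρ₋, ρ₊ ∈ [0,1]. Let ν be a probability measure on [0,1] such that ∫ Q(λ, ρ₋) dν(λ) ≤ 0 and ∫ Q(λ, ρ₊) dν(λ) ≥ 0 for the one-sided entropy fluxes Q(u,w₋) = (J(w₋∧m) − J(u))·1_{u < w₋∧m} and Q(u,w₊) = (J(u) − J(w₊∨m))·1_{u > w₊∨m}. Then ν is supported on the interval [ρ₋∧m, ρ₊∨m]. -/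
/-!
Since `J'' < 0` and `J'(m) = 0`, `J` is strictly increasing on `(-∞, m]` and strictly decreasing
on `[m, ∞)`. Hence the flux integrand of the first hypothesis is nonnegative and strictly positive
on `(-∞, ρ₋ ∧ m)`, and that of the second is nonpositive and strictly negative on `(ρ₊ ∨ m, ∞)`.
An integral of a nonnegative function that is `≤ 0` forces the set where the function is positive
to be null, so `ν` charges neither tail.
-/

open Set MeasureTheory

theorem strictMonoOn_Iic_of_deriv_eq_zero {f : ℝ → ℝ} (hf : Differentiable ℝ f)
    (hf' : StrictAnti (deriv f)) {m : ℝ} (hm : deriv f m = 0) : StrictMonoOn f (Iic m) :=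
  strictMonoOn_of_deriv_pos (convex_Iic m) hf.continuous.continuousOn fun x hx => by
    rw [interior_Iic] at hx
    exact hm ▸ hf' hx

theorem strictAntiOn_Ici_of_deriv_eq_zero {f : ℝ → ℝ} (hf : Differentiable ℝ f)
    (hf' : StrictAnti (deriv f)) {m : ℝ} (hm : deriv f m = 0) : StrictAntiOn f (Ici m) :=
  strictAntiOn_of_deriv_neg (convex_Ici m) hf.continuous.continuousOn fun x hx => by
    rw [interior_Ici] at hx
    exact hm ▸ hf' hx

theorem Continuous.integrable_of_measure_compl_eq_zero {X : Type*} [TopologicalSpace X]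
    [MeasurableSpace X] [OpensMeasurableSpace X] [T2Space X] {μ : Measure X} [IsFiniteMeasureOnCompacts μ]
    {K : Set X} (hK : IsCompact K) (hμK : μ Kᶜ = 0) {f : X → ℝ} (hf : Continuous f) :
    Integrable f μ := by
  have hfK : IntegrableOn f K μ := hf.continuousOn.integrableOn_compact hK
  rwa [IntegrableOn, Measure.restrict_eq_self_of_ae_mem (ae_iff.2 hμK)] at hfK

theorem measure_eq_zero_of_setIntegral_nonpos {X : Type*} [MeasurableSpace X] {μ : Measure X}
    {s : Set X} {f : X → ℝ} (hs : MeasurableSet s) (hfi : IntegrableOn f s μ)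
    (hpos : ∀ x ∈ s, 0 < f x) (h : ∫ x in s, f x ∂μ ≤ 0) : μ s = 0 := by
  have hf_nonneg : 0 ≤ᵐ[μ.restrict s] f :=
    (ae_restrict_iff' hs).2 (Filter.Eventually.of_forall fun x hx => (hpos x hx).le)
  have hsupp : Function.support f ∩ s = s :=
    inter_eq_right.2 fun x hx => (hpos x hx).ne'
  have := (setIntegral_pos_iff_support_of_nonneg_ae hf_nonneg hfi).not.1 h.not_gt
  rwa [hsupp, not_lt, nonpos_iff_eq_zero] at this

section OneSidedFlux

variable {μ : Measure ℝ} [IsFiniteMeasure μ] {J : ℝ → ℝ}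

theorem measure_Iio_eq_zero_of_integral_nonpos (hJ : Integrable J μ) {a : ℝ}
    (hJa : StrictMonoOn J (Iic a))
    (h : ∫ l, (if l < a then J a - J l else 0) ∂μ ≤ 0) : μ (Iio a) = 0 := by
  have hind : (fun l => if l < a then J a - J l else 0) = (Iio a).indicator (J a - J ·) := by
    ext l; simp [indicator_apply]
  rw [hind, integral_indicator measurableSet_Iio] at h
  refine measure_eq_zero_of_setIntegral_nonpos measurableSet_Iio
    ((integrable_const _).sub hJ).integrableOn (fun l hl => ?_) h
  exact sub_pos.2 (hJa (mem_Iic.2 hl.le) (mem_Iic.2 le_rfl) hl)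

theorem measure_Ioi_eq_zero_of_integral_nonneg (hJ : Integrable J μ) {b : ℝ}
    (hJb : StrictAntiOn J (Ici b))
    (h : 0 ≤ ∫ l, (if b < l then J l - J b else 0) ∂μ) : μ (Ioi b) = 0 := by
  have hind : (fun l => if b < l then J l - J b else 0) =
      fun l => -(Ioi b).indicator (J b - J ·) l := by
    ext l; by_cases hl : b < l <;> simp [hl]
  rw [hind, integral_neg, integral_indicator measurableSet_Ioi, neg_nonneg] at h
  refine measure_eq_zero_of_setIntegral_nonpos measurableSet_Ioi
    ((integrable_const _).sub hJ).integrableOn (fun l hl => ?_) h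
  exact sub_pos.2 (hJb (mem_Ici.2 le_rfl) (mem_Ici.2 hl.le) hl)

end OneSidedFlux

theorem quasistatic_stmt16_general (J : ℝ → ℝ) (hJ : ContDiff ℝ 2 J)
    (hJ'' : ∀ u : ℝ, deriv (deriv J) u < 0)
    (m : ℝ) (hm : m ∈ Set.Ioo (0:ℝ) 1) (hmax : IsMaxOn J (Set.Icc 0 1) m)
    (ρm ρp : ℝ)
    (ν : Measure ℝ) [IsProbabilityMeasure ν]
    (hsupp : ν (Set.Icc (0:ℝ) 1)ᶜ = 0)
    (hneg : ∫ l, (if l < min ρm m then J (min ρm m) - J l else 0) ∂ν ≤ 0)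
    (hpos : 0 ≤ ∫ l, (if max ρp m < l then J l - J (max ρp m) else 0) ∂ν) :
    ν (Set.Icc (min ρm m) (max ρp m))ᶜ = 0 := by
  have hJ_diff : Differentiable ℝ J := hJ.differentiable (by norm_num)
  have hJ_int : Integrable J ν :=
    hJ_diff.continuous.integrable_of_measure_compl_eq_zero isCompact_Icc hsupp
  have hJ'_anti : StrictAnti (deriv J) := strictAnti_of_deriv_neg hJ''
  have hJ'm : deriv J m = 0 := (hmax.isLocalMax (Icc_mem_nhds hm.1 hm.2)).deriv_eq_zero
  have h_left : ν (Iio (min ρm m)) = 0 :=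
    measure_Iio_eq_zero_of_integral_nonpos hJ_int
      ((strictMonoOn_Iic_of_deriv_eq_zero hJ_diff hJ'_anti hJ'm).mono
        (Iic_subset_Iic.2 (min_le_right _ _))) hneg
  have h_right : ν (Ioi (max ρp m)) = 0 :=
    measure_Ioi_eq_zero_of_integral_nonneg hJ_int
      ((strictAntiOn_Ici_of_deriv_eq_zero hJ_diff hJ'_anti hJ'm).mono
        (Ici_subset_Ici.2 (le_max_right _ _))) hpos
  refine measure_mono_null (fun x hx => ?_) (measure_union_null h_left h_right)
  simp only [mem_compl_iff, mem_Icc, not_and_or, not_le] at hx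
  exact hx

theorem quasistatic_stmt16 (J : ℝ → ℝ) (hJ : ContDiff ℝ 2 J)
    (hJ'' : ∀ u : ℝ, deriv (deriv J) u < 0) (h0 : J 0 = 0) (h1 : J 1 = 0)
    (m : ℝ) (hm : m ∈ Set.Ioo (0:ℝ) 1) (hmax : IsMaxOn J (Set.Icc 0 1) m)
    (ρm ρp : ℝ) (hρm : ρm ∈ Set.Icc (0:ℝ) 1) (hρp : ρp ∈ Set.Icc (0:ℝ) 1)
    (ν : Measure ℝ) [IsProbabilityMeasure ν]
    (hsupp : ν (Set.Icc (0:ℝ) 1)ᶜ = 0)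
    (hneg : ∫ l, (if l < min ρm m then J (min ρm m) - J l else 0) ∂ν ≤ 0)
    (hpos : 0 ≤ ∫ l, (if max ρp m < l then J l - J (max ρp m) else 0) ∂ν) :
    ν (Set.Icc (min ρm m) (max ρp m))ᶜ = 0 :=
  quasistatic_stmt16_general J hJ hJ'' m hm hmax ρm ρp ν hsupp hneg hpos
end

section
/- Let J be C², strictly concave with J(0)=J(1)=0 and maximizer m. Let ρ₋ < m and ρ₊ < ρ₋* (so (ρ₋,ρ₊) lies strictly below the critical line). Let ν be a probability measure on [ρ₋, ρ₊∨m] ⊆ [0,1] satisfying ∫ sign(λ − ρ₋)(J(λ) − J(ρ₋)) dν(λ) ≤ 0. Then ν = δ_{ρ₋}. -/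
/-!
By strict concavity `J` increases up to its maximizer `m` and decreases afterwards, so on
`[ρ₋, ρ₊ ∨ m]`, which stops short of the conjugate point `ρ₋*` where `J` returns to `J ρ₋`,
we have `J > J ρ₋` except at `ρ₋`. There the integrand equals `J - J ρ₋`, a nonnegative
continuous function vanishing only at `ρ₋`; a nonpositive integral forces it to vanish
`ν`-a.e., i.e. `ν` is concentrated at `ρ₋`.
-/

open Set MeasureTheory

namespace MeasureTheory.Measure

variable {X : Type*} [MeasurableSpace X] {ν : Measure X} [IsProbabilityMeasure ν] {a : X}

theorem eq_dirac_of_ae_eq [MeasurableSingletonClass X] (h : ∀ᵐ x ∂ν, x = a) :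
    ν = dirac a := by
  have hsingle : ν {a} = 1 := (prob_compl_eq_zero_iff (measurableSet_singleton a)).mp h
  rw [← restrict_eq_self_of_ae_mem (s := {a}) h, restrict_singleton, hsingle, one_smul]

theorem eq_dirac_of_integral_nonpos [TopologicalSpace X] [T2Space X] [OpensMeasurableSpace X]
    [MeasurableSingletonClass X] {K : Set X} (hK : IsCompact K) (hνK : ∀ᵐ x ∂ν, x ∈ K)
    {g : X → ℝ} (hg : ContinuousOn g K) (hg_nonneg : ∀ x ∈ K, 0 ≤ g x)
    (hg_eq_zero : ∀ x ∈ K, g x = 0 → x = a) (hint : ∫ x, g x ∂ν ≤ 0) : ν = dirac a := by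
  have hgi : Integrable g ν := by
    simpa only [IntegrableOn, restrict_eq_self_of_ae_mem hνK] using
      hg.integrableOn_compact (μ := ν) hK
  have hg_ae_nonneg : 0 ≤ᵐ[ν] g := by
    filter_upwards [hνK] with x hx using hg_nonneg x hx
  have hg_ae_zero : g =ᵐ[ν] 0 :=
    (integral_eq_zero_iff_of_nonneg_ae hg_ae_nonneg hgi).mp
      (le_antisymm hint (integral_nonneg_of_ae hg_ae_nonneg))
  refine eq_dirac_of_ae_eq ?_
  filter_upwards [hνK, hg_ae_zero] with x hx hgx using hg_eq_zero x hx hgx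

end MeasureTheory.Measure

section Unimodal

variable {f : ℝ → ℝ} {m : ℝ}

theorem strictMonoOn_Iic_of_deriv_strictAnti (hf : Differentiable ℝ f)
    (hf' : StrictAnti (deriv f)) (hm : deriv f m = 0) : StrictMonoOn f (Iic m) :=
  strictMonoOn_of_deriv_pos (convex_Iic m) hf.continuous.continuousOn fun x hx ↦ by
    rw [interior_Iic] at hx
    exact hm ▸ hf' hx

theorem strictAntiOn_Ici_of_deriv_strictAnti (hf : Differentiable ℝ f)
    (hf' : StrictAnti (deriv f)) (hm : deriv f m = 0) : StrictAntiOn f (Ici m) :=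
  strictAntiOn_of_deriv_neg (convex_Ici m) hf.continuous.continuousOn fun x hx ↦ by
    rw [interior_Ici] at hx
    exact hm ▸ hf' hx

theorem lt_apply_of_mem_Ioc_of_unimodal (hinc : StrictMonoOn f (Iic m))
    (hdec : StrictAntiOn f (Ici m)) {a b c : ℝ} (ha : a < m) (hb : m ≤ b) (hfb : f b = f a)
    (hc : c < b) {x : ℝ} (hx : x ∈ Ioc a (max c m)) : f a < f x := by
  rcases le_or_gt x m with hxm | hmx
  · exact hinc ha.le hxm hx.1
  · have hxc : x ≤ c := (le_max_iff.mp hx.2).resolve_right hmx.not_ge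
    exact hfb ▸ hdec hmx.le hb (hxc.trans_lt hc)

end Unimodal

theorem quasistatic_stmt17_general (J : ℝ → ℝ) (hJ : ContDiff ℝ 2 J)
    (hJ'' : ∀ u : ℝ, deriv (deriv J) u < 0)
    (m : ℝ) (hm : m ∈ Set.Ioo (0:ℝ) 1) (hmax : IsMaxOn J (Set.Icc 0 1) m)
    (ρm ρp ρs : ℝ) (hρm : ρm < m)
    (hρs : ρs ∈ Set.Icc m 1) (hJρs : J ρs = J ρm)
    (hρp : ρp < ρs)
    (ν : Measure ℝ) [IsProbabilityMeasure ν]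
    (hsupp : ν (Set.Icc ρm (max ρp m))ᶜ = 0)
    (hint : ∫ l, Real.sign (l - ρm) * (J l - J ρm) ∂ν ≤ 0) :
    ν = Measure.dirac ρm := by
  have hJd : Differentiable ℝ J := hJ.differentiable (by norm_num)
  have hJ'_anti : StrictAnti (deriv J) := strictAnti_of_deriv_neg hJ''
  have hJ'm : deriv J m = 0 := (hmax.isLocalMax (Icc_mem_nhds hm.1 hm.2)).deriv_eq_zero
  have hlt : ∀ l ∈ Ioc ρm (max ρp m), J ρm < J l :=
    fun l ↦ lt_apply_of_mem_Ioc_of_unimodal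
      (strictMonoOn_Iic_of_deriv_strictAnti hJd hJ'_anti hJ'm)
      (strictAntiOn_Ici_of_deriv_strictAnti hJd hJ'_anti hJ'm) hρm hρs.1 hJρs hρp
  have hνK : ∀ᵐ l ∂ν, l ∈ Icc ρm (max ρp m) := ae_iff.mpr hsupp
  have hsign : ∀ᵐ l ∂ν, Real.sign (l - ρm) * (J l - J ρm) = J l - J ρm := by
    filter_upwards [hνK] with l hl
    rcases hl.1.eq_or_lt with rfl | hl'
    · simp
    · rw [Real.sign_of_pos (sub_pos.mpr hl'), one_mul]
  refine Measure.eq_dirac_of_integral_nonpos isCompact_Icc hνK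
    (hJd.continuous.sub continuous_const).continuousOn (fun l hl ↦ ?_) (fun l hl hJl ↦ ?_)
    ((integral_congr_ae hsign).symm.trans_le hint)
  · rcases hl.1.eq_or_lt with rfl | hl'
    · simp
    · exact (sub_pos.mpr (hlt l ⟨hl', hl.2⟩)).le
  · by_contra hne
    exact (sub_pos.mpr (hlt l ⟨hl.1.lt_of_ne' hne, hl.2⟩)).ne' hJl

theorem quasistatic_stmt17 (J : ℝ → ℝ) (hJ : ContDiff ℝ 2 J)
    (hJ'' : ∀ u : ℝ, deriv (deriv J) u < 0) (h0 : J 0 = 0) (h1 : J 1 = 0)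
    (m : ℝ) (hm : m ∈ Set.Ioo (0:ℝ) 1) (hmax : IsMaxOn J (Set.Icc 0 1) m)
    (ρm ρp ρs : ℝ) (hρm0 : 0 ≤ ρm) (hρm : ρm < m)
    (hρs : ρs ∈ Set.Icc m 1) (hJρs : J ρs = J ρm)
    (hρp : ρp < ρs) (hρp1 : ρp ≤ 1)
    (ν : Measure ℝ) [IsProbabilityMeasure ν]
    (hsupp : ν (Set.Icc ρm (max ρp m))ᶜ = 0)
    (hint : ∫ l, Real.sign (l - ρm) * (J l - J ρm) ∂ν ≤ 0) :
    ν = Measure.dirac ρm :=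
  quasistatic_stmt17_general J hJ hJ'' m hm hmax ρm ρp ρs hρm hρs hJρs hρp ν hsupp hint
end

section
/- Let J be C², strictly concave with J(0)=J(1)=0 and maximizer m. Suppose ρ₋ < m and ρ₊ = ρ₋* (critical line). Let ν be a probability measure supported on [ρ₋, ρ₊] satisfying both ∫ sign(λ−ρ₋)(J(λ)−J(ρ₋)) dν ≤ 0 and ∫ sign(λ−ρ₊)(J(λ)−J(ρ₊)) dν ≥ 0. Then ν is supported on the two-point set {ρ₋, ρ₊}, i.e. ν = (1−f)δ_{ρ₋} + f δ_{ρ₊} for some f ∈ [0,1]; in particular ∫ J dν = J(ρ₋) = J(ρ₊). -/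
open Set MeasureTheory

lemma measurable_real_sign : Measurable Real.sign := by
  unfold Real.sign
  exact Measurable.ite (measurableSet_lt measurable_id measurable_const) measurable_const
    (Measurable.ite (measurableSet_lt measurable_const measurable_id) measurable_const
      measurable_const)

theorem quasistatic_stmt18 (J : ℝ → ℝ) (hJ : ContDiff ℝ 2 J)
    (hJ'' : ∀ u : ℝ, deriv (deriv J) u < 0) (h0 : J 0 = 0) (h1 : J 1 = 0)
    (m : ℝ) (hm : m ∈ Set.Ioo (0:ℝ) 1) (hmax : IsMaxOn J (Set.Icc 0 1) m)
    (ρm ρp : ℝ) (hρm0 : 0 ≤ ρm) (hρm : ρm < m)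
    (hρp : ρp ∈ Set.Icc m 1) (hcrit : J ρp = J ρm)
    (ν : Measure ℝ) [IsProbabilityMeasure ν]
    (hsupp : ν (Set.Icc ρm ρp)ᶜ = 0)
    (hint1 : ∫ l, Real.sign (l - ρm) * (J l - J ρm) ∂ν ≤ 0)
    (hint2 : 0 ≤ ∫ l, Real.sign (l - ρp) * (J l - J ρp) ∂ν) :
    ν ({ρm, ρp} : Set ℝ)ᶜ = 0 ∧
    (∃ f ∈ Set.Icc (0:ℝ) 1,
      ν = ENNReal.ofReal (1 - f) • Measure.dirac ρm
        + ENNReal.ofReal f • Measure.dirac ρp) ∧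
    ∫ l, J l ∂ν = J ρm ∧ J ρm = J ρp := by
  have hρ : ρm < ρp := lt_of_lt_of_le hρm hρp.1
  -- strict concavity
  have hconc : StrictConcaveOn ℝ (Set.univ : Set ℝ) J := by
    apply strictConcaveOn_of_deriv2_neg convex_univ hJ.continuous.continuousOn
    intro x _
    simpa [Function.iterate_succ, Function.comp] using hJ'' x
  -- key pointwise positivity in the open interval
  have hkey : ∀ l ∈ Ioo ρm ρp, J ρm < J l := by
    intro l hl
    obtain ⟨a, b, ha, hb, hab, hx⟩ := (Convex.mem_Ioo hρ).mp hl
    have h2 := hconc.2 (mem_univ ρm) (mem_univ ρp) (ne_of_lt hρ) ha hb hab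
    rw [smul_eq_mul, smul_eq_mul, smul_eq_mul, smul_eq_mul, hx] at h2
    calc J ρm = (a + b) * J ρm := by rw [hab]; ring
      _ = a * J ρm + b * J ρp := by rw [hcrit]; ring
      _ < J l := h2
  set F : ℝ → ℝ := fun l => Real.sign (l - ρm) * (J l - J ρm) with hF
  have hnn : ∀ l ∈ Icc ρm ρp, 0 ≤ F l := by
    intro l hl
    rcases eq_or_lt_of_le hl.1 with h | h
    · simp [hF, ← h]
    · rw [hF]
      simp only
      rw [Real.sign_of_pos (by linarith)]
      rcases eq_or_lt_of_le hl.2 with h2 | h2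
      · simp [h2, hcrit]
      · have := hkey l ⟨h, h2⟩; nlinarith
  have haeIcc : ∀ᵐ l ∂ν, l ∈ Icc ρm ρp := by
    rw [ae_iff]
    exact hsupp
  -- integrability
  obtain ⟨C, hC⟩ := (isCompact_Icc : IsCompact (Icc ρm ρp)).exists_bound_of_continuousOn
    ((hJ.continuous.sub continuous_const).continuousOn)
  have hFmeas : AEStronglyMeasurable F ν := by
    exact ((measurable_real_sign.comp (measurable_id.sub measurable_const)).mul
      ((hJ.continuous.sub continuous_const).measurable)).aestronglyMeasurable
  have hFbound : ∀ᵐ l ∂ν, ‖F l‖ ≤ C := by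
    refine haeIcc.mono fun l hl => ?_
    have h1 : ‖F l‖ = |Real.sign (l - ρm)| * |J l - J ρm| := by
      rw [hF]; simp [abs_mul]
    have h2 : |Real.sign (l - ρm)| ≤ 1 := by
      rcases lt_trichotomy (l - ρm) 0 with h | h | h
      · rw [Real.sign_of_neg h]; simp
      · rw [h, Real.sign_zero]; simp
      · rw [Real.sign_of_pos h]; simp
    have h3 : |J l - J ρm| ≤ C := by
      have := hC l hl; simpa using this
    calc ‖F l‖ = |Real.sign (l - ρm)| * |J l - J ρm| := h1
      _ ≤ 1 * |J l - J ρm| := by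
          apply mul_le_mul_of_nonneg_right h2 (abs_nonneg _)
      _ ≤ C := by simpa using h3
  have hFint : Integrable F ν := Integrable.mono' (integrable_const C) hFmeas hFbound
  have hFnn_ae : ∀ᵐ l ∂ν, 0 ≤ F l := haeIcc.mono fun l hl => hnn l hl
  have hFzero : ∫ l, F l ∂ν = 0 := le_antisymm hint1 (integral_nonneg_of_ae hFnn_ae)
  have hF0 : F =ᵐ[ν] 0 := (integral_eq_zero_iff_of_nonneg_ae hFnn_ae hFint).mp hFzero
  have hIoo : ν (Ioo ρm ρp) = 0 := by
    have hsub : Ioo ρm ρp ⊆ {l | ¬ F l = 0} := by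
      intro l hl
      have h1 : 0 < F l := by
        rw [hF]
        simp only
        rw [Real.sign_of_pos (by linarith [hl.1])]
        have := hkey l hl
        nlinarith
      simp only [mem_setOf_eq]
      linarith
    have hF0' : ν {l | ¬ F l = 0} = 0 := by
      have := hF0
      rw [Filter.EventuallyEq, ae_iff] at this
      simpa using this
    exact measure_mono_null hsub hF0'
  -- support in the two-point set
  have hScompl : ν ({ρm, ρp} : Set ℝ)ᶜ = 0 := by
    have hsub : ({ρm, ρp} : Set ℝ)ᶜ ⊆ (Icc ρm ρp)ᶜ ∪ Ioo ρm ρp := by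
      intro l hl
      simp only [mem_compl_iff, mem_insert_iff, mem_singleton_iff, not_or] at hl
      by_cases h : l ∈ Icc ρm ρp
      · right
        exact ⟨lt_of_le_of_ne h.1 (Ne.symm hl.1), lt_of_le_of_ne h.2 hl.2⟩
      · left; exact h
    exact measure_mono_null hsub (measure_union_null hsupp hIoo)
  have hmeasS : MeasurableSet ({ρm, ρp} : Set ℝ) :=
    (measurableSet_singleton ρm).union (measurableSet_singleton ρp)
  have hdisj : Disjoint ({ρm} : Set ℝ) {ρp} := by
    simp [Set.disjoint_singleton, ne_of_lt hρ]
  have hS1 : ν ({ρm, ρp} : Set ℝ) = 1 := by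
    have h := measure_add_measure_compl (μ := ν) hmeasS
    rw [hScompl, add_zero] at h
    simpa using h
  have hab : ν {ρm} + ν {ρp} = 1 := by
    rw [← hS1, show ({ρm, ρp} : Set ℝ) = {ρm} ∪ {ρp} from rfl,
      measure_union hdisj (measurableSet_singleton ρp)]
  have ham : ν {ρm} ≠ ⊤ := measure_ne_top ν _
  have hbm : ν {ρp} ≠ ⊤ := measure_ne_top ν _
  set f : ℝ := (ν {ρp}).toReal with hfdef
  have htot : (ν {ρm}).toReal + f = 1 := by
    rw [hfdef, ← ENNReal.toReal_add ham hbm, hab]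
    simp
  have hofb : ENNReal.ofReal f = ν {ρp} := ENNReal.ofReal_toReal hbm
  have hofa : ENNReal.ofReal (1 - f) = ν {ρm} := by
    rw [show (1 : ℝ) - f = (ν {ρm}).toReal by linarith]
    exact ENNReal.ofReal_toReal ham
  have hdecomp : ν = ENNReal.ofReal (1 - f) • Measure.dirac ρm
      + ENNReal.ofReal f • Measure.dirac ρp := by
    rw [hofa, hofb]
    ext s hs
    rw [Measure.add_apply, Measure.smul_apply, Measure.smul_apply,
      Measure.dirac_apply' _ hs, Measure.dirac_apply' _ hs, smul_eq_mul, smul_eq_mul]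
    have hνs : ν s = ν (s ∩ {ρm, ρp}) := by
      have hd : ν (s \ {ρm, ρp}) = 0 :=
        measure_mono_null (diff_subset_compl _ _) hScompl
      rw [← measure_inter_add_diff s hmeasS, hd, add_zero]
    rw [hνs]
    by_cases h1 : ρm ∈ s <;> by_cases h2 : ρp ∈ s
    · have : s ∩ {ρm, ρp} = {ρm, ρp} := by
        ext x; simp only [mem_inter_iff, mem_insert_iff, mem_singleton_iff]
        constructor
        · tauto
        · rintro (rfl | rfl) <;> simp [h1, h2]
      rw [this, show ({ρm, ρp} : Set ℝ) = {ρm} ∪ {ρp} from rfl,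
        measure_union hdisj (measurableSet_singleton ρp)]
      simp [Set.indicator, h1, h2]
    · have : s ∩ {ρm, ρp} = {ρm} := by
        ext x; simp only [mem_inter_iff, mem_insert_iff, mem_singleton_iff]
        constructor
        · rintro ⟨hx, (rfl | rfl)⟩ <;> tauto
        · rintro rfl; simp [h1]
      rw [this]
      simp [Set.indicator, h1, h2]
    · have : s ∩ {ρm, ρp} = {ρp} := by
        ext x; simp only [mem_inter_iff, mem_insert_iff, mem_singleton_iff]
        constructor
        · rintro ⟨hx, (rfl | rfl)⟩ <;> tauto
        · rintro rfl; simp [h2]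
      rw [this]
      simp [Set.indicator, h1, h2]
    · have : s ∩ {ρm, ρp} = ∅ := by
        ext x; simp only [mem_inter_iff, mem_insert_iff, mem_singleton_iff, mem_empty_iff_false]
        constructor
        · rintro ⟨hx, rfl | rfl⟩
          · exact h1 hx
          · exact h2 hx
        · exact False.elim
      rw [this]
      simp [Set.indicator, h1, h2]
  have hf01 : f ∈ Set.Icc (0:ℝ) 1 := by
    constructor
    · exact ENNReal.toReal_nonneg
    · rw [hfdef]
      have : ν {ρp} ≤ 1 := prob_le_one
      simpa using ENNReal.toReal_mono (by simp) this
  -- integral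
  have hJae : ∀ᵐ l ∂ν, J l = J ρm := by
    have hmem : ∀ᵐ l ∂ν, l ∈ ({ρm, ρp} : Set ℝ) := by
      rw [ae_iff]; exact hScompl
    refine hmem.mono fun l hl => ?_
    rcases hl with rfl | hl
    · rfl
    · rw [mem_singleton_iff] at hl
      rw [hl, hcrit]
  have hintJ : ∫ l, J l ∂ν = J ρm := by
    rw [integral_congr_ae hJae]
    simp
  exact ⟨hScompl, ⟨f, hf01, hdecomp⟩, hintJ, hcrit.symm⟩
end

section
/- Let J be C², strictly concave on ℝ with J(0) = J(1) = 0, maximizer m ∈ (0,1), and let ρ₋, ρ₊ : [0,T] → [0,1] with (ρ₋(t), ρ₊(t)) outside the critical segment Θ = {(z, z*) : z < m} for a.e. t. Define u(t,x) by: u = ρ₋(t) if ρ₋(t) < m and ρ₊(t) < ρ₋*(t); u = ρ₊(t) if ρ₊(t) > m and ρ₋(t) > ρ₊*(t); u = m if ρ₋(t) ≥ m and ρ₊(t) ≤ m. Then for a.e. t the function x ↦ u(t,x) is constant, and J(u(t,x)) equals sup{J(ρ) : ρ between ρ₊(t) and ρ₋(t)} if ρ₋(t) ≥ ρ₊(t),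 and inf{J(ρ) : ρ between ρ₋(t) and ρ₊(t)} if ρ₋(t) < ρ₊(t). -/
/-!
Strict concavity and `J'(m) = 0` make `J` strictly increasing on `(-∞, m]` and strictly decreasing
on `[m, ∞)`, so the conjugate of a point lies on the other side of `m`, maxima of `J` over an
interval sit at `m` or at the endpoint nearest to it, and minima sit at an endpoint. Outside the
critical segment the three regimes defining `u` then read off exactly that extremum, with `u`
independent of `x`.
-/

open Set MeasureTheory

/-- `v` realises the Godunov flux of `J` between the left state `a` and the right state `b`. -/
def IsGodunovValue (J : ℝ → ℝ) (a b v : ℝ) : Prop :=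
  (b ≤ a → J v = sSup (J '' Icc b a)) ∧ (a < b → J v = sInf (J '' Icc a b))

section Unimodal

variable {J : ℝ → ℝ} {m : ℝ}

theorem strictMonoOn_Iic_of_strictAnti_deriv (hJ : Continuous J) (hJ' : StrictAnti (deriv J))
    (hm : deriv J m = 0) : StrictMonoOn J (Iic m) :=
  strictMonoOn_of_deriv_pos (convex_Iic m) hJ.continuousOn fun x hx => by
    rw [interior_Iic] at hx
    simpa [hm] using hJ' hx

theorem strictAntiOn_Ici_of_strictAnti_deriv (hJ : Continuous J) (hJ' : StrictAnti (deriv J))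
    (hm : deriv J m = 0) : StrictAntiOn J (Ici m) :=
  strictAntiOn_of_deriv_neg (convex_Ici m) hJ.continuousOn fun x hx => by
    rw [interior_Ici] at hx
    simpa [hm] using hJ' hx

variable (hinc : StrictMonoOn J (Iic m)) (hdec : StrictAntiOn J (Ici m))
include hinc hdec

theorem apply_le_apply_center (y : ℝ) : J y ≤ J m := by
  rcases le_total y m with hy | hy
  · exact hinc.monotoneOn hy self_mem_Iic hy
  · exact hdec.antitoneOn self_mem_Ici hy hy

theorem min_le_apply_of_mem_Icc {a b y : ℝ} (hy : y ∈ Icc a b) : min (J a) (J b) ≤ J y := by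
  rcases le_total y m with hym | hym
  · exact (min_le_left _ _).trans (hinc.monotoneOn (hy.1.trans hym) hym hy.1)
  · exact (min_le_right _ _).trans (hdec.antitoneOn hym (hym.trans hy.2) hy.2)

theorem isLeast_image_Icc_left {a b : ℝ} (hab : a ≤ b) (hJab : J a ≤ J b) :
    IsLeast (J '' Icc a b) (J a) :=
  ⟨mem_image_of_mem J (left_mem_Icc.2 hab), by
    rintro _ ⟨y, hy, rfl⟩
    simpa [hJab] using min_le_apply_of_mem_Icc hinc hdec hy⟩

theorem isLeast_image_Icc_right {a b : ℝ} (hab : a ≤ b) (hJab : J b ≤ J a) :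
    IsLeast (J '' Icc a b) (J b) :=
  ⟨mem_image_of_mem J (right_mem_Icc.2 hab), by
    rintro _ ⟨y, hy, rfl⟩
    simpa [hJab] using min_le_apply_of_mem_Icc hinc hdec hy⟩

theorem isGreatest_image_Icc_of_mem {a b : ℝ} (hm : m ∈ Icc a b) :
    IsGreatest (J '' Icc a b) (J m) :=
  ⟨mem_image_of_mem J hm, by
    rintro _ ⟨y, -, rfl⟩
    exact apply_le_apply_center hinc hdec y⟩

omit hdec in
theorem isGreatest_image_Icc_of_right_le {a b : ℝ} (hab : a ≤ b) (hbm : b ≤ m) :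
    IsGreatest (J '' Icc a b) (J b) :=
  (hinc.monotoneOn.mono (Icc_subset_Iic_self.trans (Iic_subset_Iic.2 hbm))).map_isGreatest
    (isGreatest_Icc hab)

omit hinc in
theorem isGreatest_image_Icc_of_le_left {a b : ℝ} (hab : a ≤ b) (hma : m ≤ a) :
    IsGreatest (J '' Icc a b) (J a) :=
  (hdec.antitoneOn.mono (Icc_subset_Ici_self.trans (Ici_subset_Ici.2 hma))).map_isLeast
    (isLeast_Icc hab)

omit hdec in
theorem lt_of_apply_eq_of_lt_center {z c : ℝ} (hz : z < m) (hJ : J c = J z) (hc : c ≠ z) :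
    m < c := by
  by_contra! hcm
  exact hc (hinc.injOn hcm hz.le hJ)

omit hinc in
theorem lt_of_apply_eq_of_center_lt {z c : ℝ} (hz : m < z) (hJ : J c = J z) (hc : c ≠ z) :
    c < m := by
  by_contra! hcm
  exact hc (hdec.injOn hcm hz.le hJ)

theorem isGodunovValue_left {a b c : ℝ} (ham : a < m) (hmc : m < c) (hJc : J c = J a)
    (hbc : b < c) : IsGodunovValue J a b a := by
  refine ⟨fun hba => (isGreatest_image_Icc_of_right_le hinc hba ham.le).csSup_eq.symm,
    fun hab => (isLeast_image_Icc_left hinc hdec hab.le ?_).csInf_eq.symm⟩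
  rcases le_or_gt b m with hbm | hmb
  · exact hinc.monotoneOn ham.le hbm hab.le
  · exact hJc ▸ (hdec hmb.le hmc.le hbc).le

theorem isGodunovValue_right {a b c : ℝ} (hmb : m < b) (hcm : c < m) (hJc : J c = J b)
    (hca : c < a) : IsGodunovValue J a b b := by
  refine ⟨fun hba => (isGreatest_image_Icc_of_le_left hdec hba hmb.le).csSup_eq.symm,
    fun hab => (isLeast_image_Icc_right hinc hdec hab.le ?_).csInf_eq.symm⟩
  rcases le_or_gt a m with ham | hma
  · exact hJc ▸ (hinc hcm.le ham hca).le
  · exact hdec.antitoneOn hma.le hmb.le hab.le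

theorem isGodunovValue_center {a b : ℝ} (hma : m ≤ a) (hbm : b ≤ m) :
    IsGodunovValue J a b m :=
  ⟨fun _ => (isGreatest_image_Icc_of_mem hinc hdec ⟨hbm, hma⟩).csSup_eq.symm,
    fun hab => absurd (hbm.trans hma) hab.not_ge⟩

/-- `ca` and `cb` play the role of the conjugate points `a*` and `b*`. -/
theorem exists_eq_isGodunovValue {a b ca cb : ℝ} {w : ℝ → ℝ}
    (hJa : J ca = J a) (hca : a ≠ m → ca ≠ a) (hJb : J cb = J b) (hcb : b ≠ m → cb ≠ b)
    (hcrit : ¬(a < m ∧ b = ca))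
    (hw₁ : a < m → b < ca → ∀ x, w x = a) (hw₂ : m < b → cb < a → ∀ x, w x = b)
    (hw₃ : m ≤ a → b ≤ m → ∀ x, w x = m) :
    ∃ v, (∀ x, w x = v) ∧ IsGodunovValue J a b v := by
  rcases lt_or_ge a m with ham | hma
  · have hmca : m < ca := lt_of_apply_eq_of_lt_center hinc ham hJa (hca ham.ne)
    rcases lt_trichotomy b ca with hbca | rfl | hcab
    · exact ⟨a, hw₁ ham hbca, isGodunovValue_left hinc hdec ham hmca hJa hbca⟩
    · exact absurd ⟨ham, rfl⟩ hcrit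
    · have hmb : m < b := hmca.trans hcab
      have hcbm : cb < m := lt_of_apply_eq_of_center_lt hdec hmb hJb (hcb hmb.ne')
      have hcba : cb < a := by
        rw [← hinc.lt_iff_lt hcbm.le ham.le, hJb, ← hJa]
        exact hdec hmca.le hmb.le hcab
      exact ⟨b, hw₂ hmb hcba, isGodunovValue_right hinc hdec hmb hcbm hJb hcba⟩
  · rcases le_or_gt b m with hbm | hmb
    · exact ⟨m, hw₃ hma hbm, isGodunovValue_center hinc hdec hma hbm⟩
    · have hcbm : cb < m := lt_of_apply_eq_of_center_lt hdec hmb hJb (hcb hmb.ne')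
      exact ⟨b, hw₂ hmb (hcbm.trans_le hma),
        isGodunovValue_right hinc hdec hmb hcbm hJb (hcbm.trans_le hma)⟩

end Unimodal
theorem quasistatic_stmt19_general (J : ℝ → ℝ) (hJ : ContDiff ℝ 2 J)
    (hJ'' : ∀ u : ℝ, deriv (deriv J) u < 0)
    (m : ℝ) (hm : m ∈ Set.Ioo (0:ℝ) 1) (hmax : IsMaxOn J (Set.Icc 0 1) m)
    (conj : ℝ → ℝ)
    (hJc : ∀ u ∈ Set.Icc (0:ℝ) 1, J (conj u) = J u)
    (hne : ∀ u ∈ Set.Icc (0:ℝ) 1, u ≠ m → conj u ≠ u)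
    (T : ℝ)
    (ρm ρp : ℝ → ℝ)
    (hρ : ∀ t ∈ Set.Icc (0:ℝ) T, ρm t ∈ Set.Icc (0:ℝ) 1 ∧ ρp t ∈ Set.Icc (0:ℝ) 1)
    (hnoncrit : ∀ᵐ t ∂(volume.restrict (Set.Icc (0:ℝ) T)),
      ¬(ρm t < m ∧ ρp t = conj (ρm t)))
    (u : ℝ → ℝ → ℝ)
    (hu1 : ∀ t x, ρm t < m → ρp t < conj (ρm t) → u t x = ρm t)
    (hu2 : ∀ t x, m < ρp t → conj (ρp t) < ρm t → u t x = ρp t)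
    (hu3 : ∀ t x, m ≤ ρm t → ρp t ≤ m → u t x = m) :
    ∀ᵐ t ∂(volume.restrict (Set.Icc (0:ℝ) T)),
      (∀ x y : ℝ, u t x = u t y) ∧
      ∀ x : ℝ,
        (ρp t ≤ ρm t → J (u t x) = sSup (J '' Set.Icc (ρp t) (ρm t))) ∧
        (ρm t < ρp t → J (u t x) = sInf (J '' Set.Icc (ρm t) (ρp t))) := by
  have hJ' : StrictAnti (deriv J) := strictAnti_of_deriv_neg hJ''
  have hm0 : deriv J m = 0 := (hmax.isLocalMax (Icc_mem_nhds hm.1 hm.2)).deriv_eq_zero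
  have hinc := strictMonoOn_Iic_of_strictAnti_deriv hJ.continuous hJ' hm0
  have hdec := strictAntiOn_Ici_of_strictAnti_deriv hJ.continuous hJ' hm0
  filter_upwards [hnoncrit, ae_restrict_mem measurableSet_Icc] with t hcrit ht
  obtain ⟨ha, hb⟩ := hρ t ht
  obtain ⟨v, huv, hv⟩ := exists_eq_isGodunovValue hinc hdec (hJc _ ha) (hne _ ha) (hJc _ hb)
    (hne _ hb) hcrit (fun h h' x => hu1 t x h h') (fun h h' x => hu2 t x h h')
    (fun h h' x => hu3 t x h h')
  exact ⟨fun x y => by rw [huv x, huv y], fun x => huv x ▸ hv⟩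

theorem quasistatic_stmt19 (J : ℝ → ℝ) (hJ : ContDiff ℝ 2 J)
    (hJ'' : ∀ u : ℝ, deriv (deriv J) u < 0) (h0 : J 0 = 0) (h1 : J 1 = 0)
    (m : ℝ) (hm : m ∈ Set.Ioo (0:ℝ) 1) (hmax : IsMaxOn J (Set.Icc 0 1) m)
    (conj : ℝ → ℝ)
    (hmem : ∀ u ∈ Set.Icc (0:ℝ) 1, conj u ∈ Set.Icc (0:ℝ) 1)
    (hJc : ∀ u ∈ Set.Icc (0:ℝ) 1, J (conj u) = J u)
    (hne : ∀ u ∈ Set.Icc (0:ℝ) 1, u ≠ m → conj u ≠ u)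
    (hmm : conj m = m)
    (T : ℝ) (hT : 0 < T)
    (ρm ρp : ℝ → ℝ)
    (hρ : ∀ t ∈ Set.Icc (0:ℝ) T, ρm t ∈ Set.Icc (0:ℝ) 1 ∧ ρp t ∈ Set.Icc (0:ℝ) 1)
    (hnoncrit : ∀ᵐ t ∂(volume.restrict (Set.Icc (0:ℝ) T)),
      ¬(ρm t < m ∧ ρp t = conj (ρm t)))
    (u : ℝ → ℝ → ℝ)
    (hu1 : ∀ t x, ρm t < m → ρp t < conj (ρm t) → u t x = ρm t)
    (hu2 : ∀ t x, m < ρp t → conj (ρp t) < ρm t → u t x = ρp t)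
    (hu3 : ∀ t x, m ≤ ρm t → ρp t ≤ m → u t x = m) :
    ∀ᵐ t ∂(volume.restrict (Set.Icc (0:ℝ) T)),
      (∀ x y : ℝ, u t x = u t y) ∧
      ∀ x : ℝ,
        (ρp t ≤ ρm t → J (u t x) = sSup (J '' Set.Icc (ρp t) (ρm t))) ∧
        (ρm t < ρp t → J (u t x) = sInf (J '' Set.Icc (ρm t) (ρp t))) :=
  quasistatic_stmt19_general J hJ hJ'' m hm hmax conj hJc hne T ρm ρp hρ hnoncrit u hu1 hu2 hu3
end
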